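/- Let W be a basic localizer on Cat, and let α: I → J be a Grothendieck fibration between small categories such that for every object j of J the fiber I_j satisfies: the functor I_j → ⋆ is in W. Then α ∈ W. -/

import Mathlib

open CategoryTheory CategoryTheory.Limits

universe u

/-- A class of morphisms is weakly saturated if it contains identities,
satisfies 2-out-of-3, and satisfies (WS3). -/
structure IsWeaklySaturated {C : Type*} [Category C] (W : MorphismProperty C) : Prop where
  id_mem : ∀ X : C, W (𝟙 X)
  comp_mem : ∀ ⦃X Y Z : C⦄ (f : X ⟶ Y) (g : Y ⟶ Z), W f → W g → W (f ≫ g)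
  of_comp_left : ∀ ⦃X Y Z : C⦄ (f : X ⟶ Y) (g : Y ⟶ Z), W f → W (f ≫ g) → W g
  of_comp_right : ∀ ⦃X Y Z : C⦄ (f : X ⟶ Y) (g : Y ⟶ Z), W g → W (f ≫ g) → W f
  ws3 : ∀ ⦃X Y : C⦄ (p : Y ⟶ X) (s : X ⟶ Y), s ≫ p = 𝟙 X → W (p ≫ s) → W p

/-- The terminal category, as an object of `Cat`. -/
abbrev Cat.pt : Cat.{u, u} := Cat.of (Discrete PUnit.{u + 1})

/-- A basic localizer (Grothendieck's « localisateur fondamental ») on `Cat`: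
(L1) weak saturation, (L2) categories with a terminal object are aspherical,
(L3) locality over a base via comma categories. -/
structure IsBasicLocalizer (W : MorphismProperty Cat.{u, u}) : Prop where
  weaklySaturated : IsWeaklySaturated W
  terminal : ∀ (I : Cat.{u, u}) [HasTerminal I],
    W (X := I) (Y := Cat.pt.{u}) (Functor.star I).toCatHom
  locality : ∀ ⦃I J K : Cat.{u, u}⦄ (w : I ⟶ J) (v : J ⟶ K),
    (∀ k : K,
      W (X := Cat.of (Comma ((w.toFunctor : ↥I ⥤ ↥J) ⋙ (v.toFunctor : ↥J ⥤ ↥K)) (Functor.fromPUnit.{u} k)))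
        (Y := Cat.of (Comma (v.toFunctor : ↥J ⥤ ↥K) (Functor.fromPUnit.{u} k)))
        (Comma.preLeft (w.toFunctor : ↥I ⥤ ↥J) (v.toFunctor : ↥J ⥤ ↥K) (Functor.fromPUnit.{u} k)).toCatHom) →
    W w

/-!
The fibre `I_j` of `α` embeds into the coslice `j ↓ α` as a left adjoint: the right adjoint sends
`(i, f : j ⟶ α i)` to the source of a Cartesian lift of `f`. Left adjoints lie in `W` (their slices
have terminal objects, so Theorem A, i.e. the locality axiom with `v = 𝟙`, applies), hence every
coslice `j ↓ α` is aspherical. These coslices are the opposites of the slices of `αᵒᵖ`, so Theorem A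
gives `αᵒᵖ ∈ W` once asphericity is known to be stable under `ᵒᵖ`. Both this stability and the step
from `αᵒᵖ ∈ W` back to `α ∈ W` come from the twisted arrow category `Tw C`: its projections to `C`
and to `Cᵒᵖ` lie in `W`, because the slice of `Tw C ⥤ C` over `c` maps to `(C/c)ᵒᵖ`, which has an
initial object, by a left adjoint, and `Tw Cᵒᵖ ≅ Tw C` exchanges the two projections.
-/

open Opposite

def IsAspherical (W : MorphismProperty Cat.{u, u}) (C : Type u) [Category.{u} C] : Prop :=
  W (Functor.star C).toCatHom

/-- `CostructuredArrow F b` is a comma category over `Discrete PUnit.{1}`, while the locality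
axiom uses `Discrete PUnit.{u + 1}`. -/
noncomputable def CategoryTheory.Comma.fromPUnitEquivCostructuredArrow {A B : Type u}
    [Category.{u} A] [Category.{u} B] (F : A ⥤ B) (b : B) :
    Comma F (Functor.fromPUnit.{u} b) ≌ CostructuredArrow F b :=
  (Comma.preRight F (Discrete.equivalence Equiv.punitEquivPUnit.{u + 1, 1}).functor
    (Functor.fromPUnit.{0} b)).asEquivalence

lemma CategoryTheory.Functor.toCatHom_comp_star {A B : Type u} [Category.{u} A]
    [Category.{u} B] (F : A ⥤ B) :
    F.toCatHom ≫ (Functor.star B).toCatHom = (Functor.star A).toCatHom :=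
  Cat.isTerminalDiscretePUnit.hom_ext _ _

structure TwistedArrow (C : Type u) [Category.{u} C] where
  {src : C}
  {tgt : C}
  hom : src ⟶ tgt

namespace TwistedArrow

variable {C : Type u} [Category.{u} C]

@[ext]
structure Hom (X Y : TwistedArrow C) where
  pre : Y.src ⟶ X.src
  post : X.tgt ⟶ Y.tgt
  w : pre ≫ X.hom ≫ post = Y.hom := by cat_disch

instance : Category (TwistedArrow C) where
  Hom := Hom
  id X := ⟨𝟙 _, 𝟙 _, by simp⟩
  comp f g := ⟨g.pre ≫ f.pre, f.post ≫ g.post, by rw [← g.w, ← f.w]; simp only [Category.assoc]⟩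

@[ext]
lemma hom_ext {X Y : TwistedArrow C} {f g : X ⟶ Y} (hpre : f.pre = g.pre)
    (hpost : f.post = g.post) : f = g :=
  Hom.ext hpre hpost

@[simp]
lemma w {X Y : TwistedArrow C} (f : X ⟶ Y) : f.pre ≫ X.hom ≫ f.post = Y.hom := f.w

@[simp]
lemma w_assoc {X Y : TwistedArrow C} (f : X ⟶ Y) {Z : C} (h : Y.tgt ⟶ Z) :
    f.pre ≫ X.hom ≫ f.post ≫ h = Y.hom ≫ h := by
  rw [← w f]; simp only [Category.assoc]

@[simp] lemma id_pre (X : TwistedArrow C) : Hom.pre (𝟙 X) = 𝟙 _ := rfl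
@[simp] lemma id_post (X : TwistedArrow C) : Hom.post (𝟙 X) = 𝟙 _ := rfl
@[simp] lemma comp_pre {X Y Z : TwistedArrow C} (f : X ⟶ Y) (g : Y ⟶ Z) :
    (f ≫ g).pre = g.pre ≫ f.pre := rfl
@[simp] lemma comp_post {X Y Z : TwistedArrow C} (f : X ⟶ Y) (g : Y ⟶ Z) :
    (f ≫ g).post = f.post ≫ g.post := rfl

abbrev target (C : Type u) [Category.{u} C] : TwistedArrow C ⥤ C where
  obj X := X.tgt
  map f := f.post

def source (C : Type u) [Category.{u} C] : TwistedArrow C ⥤ Cᵒᵖ where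
  obj X := op X.src
  map f := f.pre.op

def map {D : Type u} [Category.{u} D] (F : C ⥤ D) : TwistedArrow C ⥤ TwistedArrow D where
  obj X := ⟨F.map X.hom⟩
  map f := ⟨F.map f.pre, F.map f.post, by simp only [← F.map_comp, w]⟩

/-- Under this equivalence `source C` corresponds to `target Cᵒᵖ` on the nose. -/
def opEquivalence : TwistedArrow Cᵒᵖ ≌ TwistedArrow C where
  functor :=
    { obj X := ⟨X.hom.unop⟩
      map f := ⟨f.post.unop, f.pre.unop, by simp only [← unop_comp, Category.assoc, w]⟩ }
  inverse :=
    { obj X := ⟨X.hom.op⟩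
      map f := ⟨f.post.op, f.pre.op, by simp only [← op_comp, Category.assoc, w]⟩ }
  unitIso := Iso.refl _
  counitIso := Iso.refl _

abbrev toOverOp (c : C) : CostructuredArrow (target C) c ⥤ (Over c)ᵒᵖ where
  obj X := op (Over.mk (X.left.hom ≫ X.hom))
  map f := (Over.homMk f.left.pre (by rw [← CostructuredArrow.w f]; simp)).op

abbrev ofOverOp (c : C) : (Over c)ᵒᵖ ⥤ CostructuredArrow (target C) c where
  obj X := CostructuredArrow.mk (Y := (⟨X.unop.hom⟩ : TwistedArrow C)) (𝟙 c)
  map f := CostructuredArrow.homMk ⟨f.unop.left, 𝟙 c, by simp⟩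

def toOverOpAdjunction (c : C) : toOverOp c ⊣ ofOverOp c :=
  Adjunction.mkOfUnitCounit
    { unit :=
        { app X := CostructuredArrow.homMk (⟨𝟙 _, X.hom, Category.id_comp _⟩ :
            X.left ⟶ ((ofOverOp c).obj ((toOverOp c).obj X)).left) (Category.comp_id _)
          naturality _ _ f := by ext <;> simp [← CostructuredArrow.w f] }
      counit :=
        { app X := (Over.homMk (𝟙 X.unop.left) :
            X.unop ⟶ ((toOverOp c).obj ((ofOverOp c).obj X)).unop).op
          naturality _ _ f := Quiver.Hom.unop_inj (by ext; simp) }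
      left_triangle := by ext; exact Quiver.Hom.unop_inj (by ext; simp)
      right_triangle := by ext <;> simp }

end TwistedArrow

namespace CategoryTheory.Functor

variable {I J : Type u} [Category.{u} I] [Category.{u} J] (p : I ⥤ J)

lemma isHomLift_iff_eqToHom_comp {j : J} {a b : I} (ha : p.obj a = j) (f : j ⟶ p.obj b)
    (φ : a ⟶ b) : p.IsHomLift f φ ↔ eqToHom ha.symm ≫ p.map φ = f := by
  refine ⟨fun _ ↦ by simp [IsHomLift.fac' p f φ], fun h ↦ IsHomLift.of_fac' p f φ ha rfl ?_⟩
  simp [← h]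

namespace Fiber

open IsPreFibered

def toStructuredArrow (j : J) : p.Fiber j ⥤ StructuredArrow j p :=
  fiberInclusion.toStructuredArrow j p (fun x ↦ fiberInclusionCompIsoConst.inv.app x)
    fun g ↦ by simpa using (fiberInclusionCompIsoConst.inv.naturality g).symm

instance {j : J} {x : p.Fiber j} {e : StructuredArrow j p}
    (g : (toStructuredArrow p j).obj x ⟶ e) : p.IsHomLift e.hom g.right :=
  (isHomLift_iff_eqToHom_comp p x.2 _ _).2 (StructuredArrow.w g)

noncomputable def cartesianLift [p.IsFibered] {j : J} (e : StructuredArrow j p) :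
    CostructuredArrow (toStructuredArrow p j) e :=
  CostructuredArrow.mk (Y := Fiber.mk (pullbackObj_proj (p := p) rfl e.hom))
    (StructuredArrow.homMk (f := (toStructuredArrow p j).obj (Fiber.mk _))
      (pullbackMap (p := p) rfl e.hom)
      ((isHomLift_iff_eqToHom_comp p (pullbackObj_proj (p := p) rfl e.hom) e.hom
        (pullbackMap (p := p) rfl e.hom)).1 inferInstance))

noncomputable def isTerminalCartesianLift [p.IsFibered] {j : J} (e : StructuredArrow j p) :
    IsTerminal (cartesianLift p e) :=
  IsTerminal.ofUniqueHom (fun Y ↦ CostructuredArrow.homMk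
      (Fiber.homMk p j (IsCartesian.map p e.hom (pullbackMap (p := p) rfl e.hom) Y.hom.right))
      (by ext; exact IsCartesian.fac p e.hom (pullbackMap (p := p) rfl e.hom) Y.hom.right))
    fun Y m ↦ by
      ext
      -- `m.left.2` lifts `𝟙 j` with endpoints that only unfold to the ones expected here.
      exact @IsCartesian.map_uniq _ _ _ _ p _ _ _ _ e.hom (pullbackMap (p := p) rfl e.hom) _ _
        Y.hom.right _ m.left.1 m.left.2 (congrArg CommaMorphism.right (CostructuredArrow.w m))

instance [p.IsFibered] (j : J) : (toStructuredArrow p j).IsLeftAdjoint :=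
  isLeftAdjoint_iff_hasTerminal_costructuredArrow.2 fun e ↦ (isTerminalCartesianLift p e).hasTerminal

end Fiber

end CategoryTheory.Functor

namespace IsBasicLocalizer

variable {W : MorphismProperty Cat.{u, u}} {A B : Type u} [Category.{u} A] [Category.{u} B]

lemma mem_of_isAspherical (hW : IsBasicLocalizer W) (F : A ⥤ B) (hA : IsAspherical W A)
    (hB : IsAspherical W B) : W F.toCatHom :=
  hW.weaklySaturated.of_comp_right _ _ hB (by rwa [Functor.toCatHom_comp_star])

lemma isAspherical_source_of_mem (hW : IsBasicLocalizer W) {F : A ⥤ B} (hF : W F.toCatHom)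
    (hB : IsAspherical W B) : IsAspherical W A := by
  rw [IsAspherical, ← Functor.toCatHom_comp_star F]
  exact hW.weaklySaturated.comp_mem _ _ hF hB

lemma isAspherical_target_of_mem (hW : IsBasicLocalizer W) {F : A ⥤ B} (hF : W F.toCatHom)
    (hA : IsAspherical W A) : IsAspherical W B :=
  hW.weaklySaturated.of_comp_left _ _ hF (by rwa [Functor.toCatHom_comp_star])

lemma isAspherical_of_hasTerminal (hW : IsBasicLocalizer W) (C : Type u) [Category.{u} C]
    [HasTerminal C] : IsAspherical W C :=
  @IsBasicLocalizer.terminal W hW (Cat.of C) ‹_›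

lemma mem_of_forall_isAspherical_comma (hW : IsBasicLocalizer W) (F : A ⥤ B)
    (h : ∀ b : B, IsAspherical W (Comma F (Functor.fromPUnit.{u} b))) : W F.toCatHom := by
  refine hW.locality F.toCatHom (𝟙 (Cat.of B)) fun (b : B) ↦ hW.mem_of_isAspherical _ (h b) ?_
  have : HasTerminal (Comma (𝟭 B) (Functor.fromPUnit.{u} b)) :=
    (Comma.fromPUnitEquivCostructuredArrow (𝟭 B) b).hasTerminal_iff.2
      (Over.mkIdTerminal (X := b)).hasTerminal
  exact hW.isAspherical_of_hasTerminal (Comma (𝟭 B) (Functor.fromPUnit.{u} b))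

lemma mem_of_forall_hasTerminal_costructuredArrow (hW : IsBasicLocalizer W) (F : A ⥤ B)
    (h : ∀ b : B, HasTerminal (CostructuredArrow F b)) : W F.toCatHom :=
  hW.mem_of_forall_isAspherical_comma F fun b ↦
    have := (Comma.fromPUnitEquivCostructuredArrow F b).hasTerminal_iff.2 (h b)
    hW.isAspherical_of_hasTerminal _

lemma mem_of_isLeftAdjoint (hW : IsBasicLocalizer W) (F : A ⥤ B) [F.IsLeftAdjoint] :
    W F.toCatHom :=
  hW.mem_of_forall_hasTerminal_costructuredArrow F
    (isLeftAdjoint_iff_hasTerminal_costructuredArrow.1 inferInstance)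

lemma isAspherical_iff_of_equivalence (hW : IsBasicLocalizer W) (e : A ≌ B) :
    IsAspherical W A ↔ IsAspherical W B :=
  ⟨hW.isAspherical_target_of_mem (hW.mem_of_isLeftAdjoint e.functor),
    hW.isAspherical_source_of_mem (hW.mem_of_isLeftAdjoint e.functor)⟩

lemma mem_of_forall_isAspherical_costructuredArrow (hW : IsBasicLocalizer W) (F : A ⥤ B)
    (h : ∀ b : B, IsAspherical W (CostructuredArrow F b)) : W F.toCatHom :=
  hW.mem_of_forall_isAspherical_comma F fun b ↦
    (hW.isAspherical_iff_of_equivalence (Comma.fromPUnitEquivCostructuredArrow F b)).2 (h b)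

lemma isAspherical_of_hasInitial (hW : IsBasicLocalizer W) (C : Type u) [Category.{u} C]
    [HasInitial C] : IsAspherical W C := by
  let i : Discrete PUnit.{u + 1} ⥤ C := Functor.fromPUnit (⊥_ C)
  have hi : W i.toCatHom := hW.mem_of_forall_hasTerminal_costructuredArrow i fun c ↦
    IsTerminal.hasTerminal (X := CostructuredArrow.mk (Y := ⟨⟨⟩⟩) (initial.to c))
      (IsTerminal.ofUniqueHom (fun Y ↦ CostructuredArrow.homMk (𝟙 _) (initial.hom_ext _ _))
        fun _ _ ↦ CostructuredArrow.hom_ext _ _ (Subsingleton.elim _ _))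
  refine hW.isAspherical_target_of_mem hi ?_
  rw [IsAspherical, show (Functor.star _).toCatHom = 𝟙 Cat.pt from
    Cat.isTerminalDiscretePUnit.hom_ext _ _]
  exact hW.weaklySaturated.id_mem _

lemma mem_twistedArrow_target (hW : IsBasicLocalizer W) (C : Type u) [Category.{u} C] :
    W (TwistedArrow.target C).toCatHom :=
  hW.mem_of_forall_isAspherical_costructuredArrow _ fun c ↦
    have := (TwistedArrow.toOverOpAdjunction c).isLeftAdjoint
    hW.isAspherical_source_of_mem (hW.mem_of_isLeftAdjoint (TwistedArrow.toOverOp c))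
      (hW.isAspherical_of_hasInitial _)

lemma mem_twistedArrow_source (hW : IsBasicLocalizer W) (C : Type u) [Category.{u} C] :
    W (TwistedArrow.source C).toCatHom :=
  hW.weaklySaturated.of_comp_left _ _
    (hW.mem_of_isLeftAdjoint TwistedArrow.opEquivalence.functor)
    (hW.mem_twistedArrow_target Cᵒᵖ)

lemma isAspherical_op (hW : IsBasicLocalizer W) (h : IsAspherical W A) : IsAspherical W Aᵒᵖ :=
  hW.isAspherical_target_of_mem (hW.mem_twistedArrow_source A)
    (hW.isAspherical_source_of_mem (hW.mem_twistedArrow_target A) h)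

/-- `TwistedArrow.map F` lies over both `F` and `F.op`. -/
lemma mem_of_mem_op (hW : IsBasicLocalizer W) (F : A ⥤ B) (h : W F.op.toCatHom) :
    W F.toCatHom := by
  have hmap : W (TwistedArrow.map F).toCatHom :=
    hW.weaklySaturated.of_comp_right _ (TwistedArrow.source B).toCatHom
      (hW.mem_twistedArrow_source B)
      (hW.weaklySaturated.comp_mem (TwistedArrow.source A).toCatHom _
        (hW.mem_twistedArrow_source A) h)
  exact hW.weaklySaturated.of_comp_left (TwistedArrow.target A).toCatHom _
    (hW.mem_twistedArrow_target A)
    (hW.weaklySaturated.comp_mem _ (TwistedArrow.target B).toCatHom hmap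
      (hW.mem_twistedArrow_target B))

end IsBasicLocalizer

/-- If `α : I ⟶ J` is a Grothendieck fibration all of whose fibers are
`W`-aspherical, then `α ∈ W`. -/
theorem IsBasicLocalizer.fibration_mem {W : MorphismProperty Cat.{u, u}}
    (hW : IsBasicLocalizer W) {I J : Cat.{u, u}} (α : I ⟶ J)
    [Functor.IsFibered (α.toFunctor : ↥I ⥤ ↥J)]
    (h : ∀ j : ↥J,
      W (X := Cat.of (Functor.Fiber (α.toFunctor : ↥I ⥤ ↥J) j)) (Y := Cat.pt.{u})
        (Functor.star (Functor.Fiber (α.toFunctor : ↥I ⥤ ↥J) j)).toCatHom) :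
    W α := by
  refine hW.mem_of_mem_op α.toFunctor
    (hW.mem_of_forall_isAspherical_costructuredArrow _ fun j ↦ ?_)
  rw [← hW.isAspherical_iff_of_equivalence (structuredArrowOpEquivalence α.toFunctor j.unop)]
  exact hW.isAspherical_op (hW.isAspherical_target_of_mem
    (hW.mem_of_isLeftAdjoint (Functor.Fiber.toStructuredArrow α.toFunctor j.unop)) (h j.unop))
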